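/- arXiv:2412.02535 — 2 statements merged into one kernel-verified Lean document; each statement's English description precedes it below -/
import Mathlib

section
/- Control of attacks, outside-ball bound. Let ϱ and ϱ^m be Borel probability measures on ℝ^d. Fix α ≥ 1/(k_G K_G (R^K_G)^{k_G}). Let r_G ∈ (0, min{R_G, R^H_G, R^K_G, (min{G_∞, (η_G R^K_G)^{1/ν_G}, K_G (R^K_G)^{k_G}}/(2H_G))^{1/h_G}}] and δ_q ∈ (0, min{L_∞, (η_L r_G)^{1/ν_L}}/2], and assume there exists β ∈ (0,1) satisfying q_β[ϱ] + δ_q ≤ L̲ + min{L_∞, (η_L r_G)^{1/ν_L}}. Let r ∈ (0, min{r_G, R^H_L, (δ_q/H_L)^{1/h_L}}] with B_r(θ*) ⊆ B_R(0), and let u > 0 satisfy u + G_r + H_G r_G^{h_G} ≤ min{G_∞, (η_G R^K_G)^{1/ν_G}, K_G (R^K_G)^{k_G}}. Then exp(α G_r) · ∫_{Q_β[ϱ] ∩ (B_{R^K_G}(θ*))^c} ‖θ−θ*‖₂ exp(−α K_G ‖θ−θ*‖₂^{k_G}) dϱ^m(θ) ≤ R^K_G · exp(−αu) · ϱ^m(N_{r_G}(Θ))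 ≤ R^K_G · exp(−αu). -/
open MeasureTheory Set
open scoped RealInnerProductSpace ENNReal

noncomputable section

/-- The `a`-quantile of `ϱ` under `L`:
`q_a[ϱ] := inf {q : a ≤ ϱ({L ≤ q})}`. -/
def quant {d : ℕ} (L : EuclideanSpace ℝ (Fin d) → ℝ)
    (ϱ : Measure (EuclideanSpace ℝ (Fin d))) (a : ℝ) : ℝ :=
  sInf {q : ℝ | a ≤ (ϱ {θ | L θ ≤ q}).toReal}

/-- The quantiled sub-level set `Q_β[ϱ]`. -/
def Qset {d : ℕ} (L : EuclideanSpace ℝ (Fin d) → ℝ) (R δq β : ℝ)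
    (ϱ : Measure (EuclideanSpace ℝ (Fin d))) : Set (EuclideanSpace ℝ (Fin d)) :=
  {θ | θ ∈ Metric.closedBall (0 : EuclideanSpace ℝ (Fin d)) R ∧
    L θ ≤ (2 / β) * (∫ a in (β / 2)..β, quant L ϱ a) + δq}

/-- The consensus point `m_{α,β}[ϱ]`, a weighted average with weight
`ω_α(θ) = exp(-α G θ)` over `Q_β[ϱ]`. -/
def consensus {d : ℕ} (L G : EuclideanSpace ℝ (Fin d) → ℝ) (R δq α β : ℝ)
    (ϱ : Measure (EuclideanSpace ℝ (Fin d))) : EuclideanSpace ℝ (Fin d) :=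
  (∫ θ in Qset L R δq β ϱ, Real.exp (-α * G θ) ∂ϱ)⁻¹ •
    ∫ θ in Qset L R δq β ϱ, Real.exp (-α * G θ) • θ ∂ϱ

/-- The argmin set `Θ` of `L`. -/
def argminSet {d : ℕ} (L : EuclideanSpace ℝ (Fin d) → ℝ) : Set (EuclideanSpace ℝ (Fin d)) :=
  {θ | ∀ θ', L θ ≤ L θ'}

/-- The neighborhood `N_r(S) = {θ : dist(θ, S) ≤ r}`. -/
def nbhd {d : ℕ} (S : Set (EuclideanSpace ℝ (Fin d))) (r : ℝ) :
    Set (EuclideanSpace ℝ (Fin d)) :=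
  {θ | Metric.infDist θ S ≤ r}

/-- `G_r := sup_{θ ∈ B_r(θ*)} G(θ) - G(θ*)`. -/
def Gsup {d : ℕ} (G : EuclideanSpace ℝ (Fin d) → ℝ) (θstar : EuclideanSpace ℝ (Fin d))
    (r : ℝ) : ℝ :=
  sSup (G '' Metric.closedBall θstar r) - G θstar

/-! Points of `Q_β[ϱ]` have `L`-value at most `q_β[ϱ] + δ_q`: the quantile function is
nondecreasing, so its average over `[β/2, β]` is at most `q_β[ϱ]`. By the error bound (A3) they
therefore lie in `N_{r_G}(Θ)`. Once `α k_G K_G (R^K_G)^{k_G} ≥ 1`, the integrand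
`s ↦ s exp(-α K_G s^{k_G})` is nonincreasing on `[R^K_G, ∞)`, so outside `B_{R^K_G}(θ*)` it is
bounded by its value at `R^K_G`; the condition on `u` turns
`exp(α G_r) exp(-α K_G (R^K_G)^{k_G})` into `exp(-α u)`. -/

section

open Filter Topology ProbabilityTheory

theorem sInf_setOf_le_mono_of_tendsto {F : ℝ → ℝ} (hbot : Tendsto F atBot (𝓝 0))
    (htop : Tendsto F atTop (𝓝 1)) {a b : ℝ} (ha : 0 < a) (hab : a ≤ b) (hb : b < 1) :
    sInf {q | a ≤ F q} ≤ sInf {q | b ≤ F q} := by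
  obtain ⟨q₀, hq₀⟩ := (hbot.eventually (eventually_lt_nhds ha)).exists_forall_of_atBot
  have hbdd : BddBelow {q | a ≤ F q} :=
    ⟨q₀, fun q hq => le_of_not_gt fun hlt => (hq₀ q hlt.le).not_ge hq⟩
  have hne : {q | b ≤ F q}.Nonempty := (htop.eventually (eventually_gt_nhds hb)).exists.imp
    fun _ hq => hq.le
  exact csInf_le_csInf hbdd hne fun q hq => hab.trans hq

theorem quant_eq_sInf_cdf {d : ℕ} {L : EuclideanSpace ℝ (Fin d) → ℝ} (hL : Measurable L)
    (ϱ : Measure (EuclideanSpace ℝ (Fin d))) [IsProbabilityMeasure ϱ] (a : ℝ) :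
    quant L ϱ a = sInf {q | a ≤ cdf (ϱ.map L) q} := by
  have := Measure.isProbabilityMeasure_map (μ := ϱ) hL.aemeasurable
  simp only [cdf_eq_real, measureReal_def, Measure.map_apply hL measurableSet_Iic]
  rfl

theorem quant_mono {d : ℕ} {L : EuclideanSpace ℝ (Fin d) → ℝ} (hL : Measurable L)
    (ϱ : Measure (EuclideanSpace ℝ (Fin d))) [IsProbabilityMeasure ϱ] :
    MonotoneOn (quant L ϱ) (Ioo 0 1) := by
  intro a ha b hb hab
  simp only [quant_eq_sInf_cdf hL]
  exact sInf_setOf_le_mono_of_tendsto (tendsto_cdf_atBot _) (tendsto_cdf_atTop _) ha.1 hab hb.2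

theorem intervalIntegral_le_mul_of_monotoneOn {f : ℝ → ℝ} {a b : ℝ} (hab : a ≤ b)
    (hf : MonotoneOn f (Icc a b)) : ∫ x in a..b, f x ≤ (b - a) * f b := by
  have hb : b ∈ Icc a b := right_mem_Icc.2 hab
  calc ∫ x in a..b, f x ≤ ∫ _ in a..b, f b :=
        intervalIntegral.integral_mono_on hab ((uIcc_of_le hab ▸ hf).intervalIntegrable)
          intervalIntegrable_const fun x hx => hf hx hb hx.2
    _ = (b - a) * f b := by rw [intervalIntegral.integral_const, smul_eq_mul]

theorem quant_average_le {d : ℕ} {L : EuclideanSpace ℝ (Fin d) → ℝ} (hL : Measurable L)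
    (ϱ : Measure (EuclideanSpace ℝ (Fin d))) [IsProbabilityMeasure ϱ] {β : ℝ}
    (hβ : β ∈ Ioo (0 : ℝ) 1) :
    (2 / β) * (∫ a in (β / 2)..β, quant L ϱ a) ≤ quant L ϱ β := by
  obtain ⟨hβ0, hβ1⟩ := hβ
  have hmono : MonotoneOn (quant L ϱ) (Icc (β / 2) β) :=
    (quant_mono hL ϱ).mono fun a ha => ⟨by linarith [ha.1], by linarith [ha.2]⟩
  calc (2 / β) * (∫ a in (β / 2)..β, quant L ϱ a)
      ≤ (2 / β) * ((β - β / 2) * quant L ϱ β) := by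
        gcongr
        exact intervalIntegral_le_mul_of_monotoneOn (by linarith) hmono
    _ = quant L ϱ β := by field_simp; ring

theorem Qset_subset_setOf_le_quant {d : ℕ} {L : EuclideanSpace ℝ (Fin d) → ℝ}
    (hL : Measurable L) (ϱ : Measure (EuclideanSpace ℝ (Fin d))) [IsProbabilityMeasure ϱ]
    (R δq : ℝ) {β : ℝ} (hβ : β ∈ Ioo (0 : ℝ) 1) :
    Qset L R δq β ϱ ⊆ {θ | L θ ≤ quant L ϱ β + δq} :=
  fun _ hθ => hθ.2.trans (by linarith [quant_average_le hL ϱ hβ])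

theorem mem_nbhd_argminSet_of_le {d : ℕ} {L : EuclideanSpace ℝ (Fin d) → ℝ}
    {θstar θ : EuclideanSpace ℝ (Fin d)} (hθstar : θstar ∈ argminSet L)
    {Linfty RL ηL νL : ℝ} (hηL : 0 < ηL) (hνL : 0 < νL)
    (hA3a : ∀ θ ∈ nbhd (argminSet L) RL,
      Metric.infDist θ (argminSet L) ≤ (1 / ηL) * (L θ - L θstar) ^ νL)
    (hA3b : ∀ θ, θ ∉ nbhd (argminSet L) RL → Linfty < L θ - L θstar)
    {rg : ℝ} (hrg : 0 ≤ rg) (hθ : L θ ≤ L θstar + min Linfty ((ηL * rg) ^ (1 / νL))) :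
    θ ∈ nbhd (argminSet L) rg := by
  have hnear : θ ∈ nbhd (argminSet L) RL := by
    by_contra hfar
    linarith [hA3b θ hfar, min_le_left Linfty ((ηL * rg) ^ (1 / νL))]
  have hpow : (L θ - L θstar) ^ νL ≤ ηL * rg := by
    calc (L θ - L θstar) ^ νL ≤ ((ηL * rg) ^ (1 / νL)) ^ νL := by
          gcongr
          · exact sub_nonneg.2 (hθstar θ)
          · linarith [min_le_right Linfty ((ηL * rg) ^ (1 / νL))]
      _ = ηL * rg := by
          rw [← Real.rpow_mul (by positivity), one_div_mul_cancel hνL.ne', Real.rpow_one]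
  calc Metric.infDist θ (argminSet L) ≤ (1 / ηL) * (L θ - L θstar) ^ νL := hA3a θ hnear
    _ ≤ (1 / ηL) * (ηL * rg) := by gcongr
    _ = rg := by field_simp

theorem hasDerivAt_mul_exp_neg_mul_rpow {c k s : ℝ} (hs : 0 < s) :
    HasDerivAt (fun s => s * Real.exp (-c * s ^ k))
      (Real.exp (-c * s ^ k) * (1 - c * k * s ^ k)) s := by
  refine ((hasDerivAt_id' s).mul
    (((Real.hasDerivAt_rpow_const (Or.inl hs.ne')).const_mul (-c)).exp)).congr_deriv ?_
  rw [Real.rpow_sub hs, Real.rpow_one]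
  field_simp
  ring

theorem antitoneOn_mul_exp_neg_mul_rpow {c k s₀ : ℝ} (hs₀ : 0 < s₀) (hk : 0 < k)
    (h : 1 ≤ c * k * s₀ ^ k) :
    AntitoneOn (fun s => s * Real.exp (-c * s ^ k)) (Ici s₀) := by
  have hck : 0 < c * k := pos_of_mul_pos_left (one_pos.trans_le h) (by positivity)
  refine antitoneOn_of_hasDerivWithinAt_nonpos (convex_Ici s₀)
    (fun s hs => (hasDerivAt_mul_exp_neg_mul_rpow (hs₀.trans_le hs)).continuousAt
      |>.continuousWithinAt)
    (fun s hs => (hasDerivAt_mul_exp_neg_mul_rpow (hs₀.trans (interior_Ici.subset hs)))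
      |>.hasDerivWithinAt) fun s hs => ?_
  rw [interior_Ici] at hs
  have : c * k * s₀ ^ k ≤ c * k * s ^ k := by gcongr; exact le_of_lt hs
  exact mul_nonpos_of_nonneg_of_nonpos (Real.exp_pos _).le (by linarith)

theorem setIntegral_le_mul_measureReal {X : Type*} [MeasurableSpace X] {μ : Measure X}
    [IsFiniteMeasure μ] {f : X → ℝ} {s t : Set X} {C : ℝ} (hC : 0 ≤ C) (hst : s ⊆ t)
    (hf : ∀ x ∈ s, 0 ≤ f x ∧ f x ≤ C) : ∫ x in s, f x ∂μ ≤ C * μ.real t :=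
  calc ∫ x in s, f x ∂μ ≤ ‖∫ x in s, f x ∂μ‖ := Real.le_norm_self _
    _ ≤ C * μ.real s := norm_setIntegral_le_of_norm_le_const (measure_lt_top μ s)
        fun x hx => by rw [Real.norm_of_nonneg (hf x hx).1]; exact (hf x hx).2
    _ ≤ C * μ.real t := mul_le_mul_of_nonneg_left (measureReal_mono hst) hC

end

theorem control_of_attacks_outside_ball_general
    {d : ℕ}
    (L G : EuclideanSpace ℝ (Fin d) → ℝ)
    (hLc : Continuous L)
    (θstar : EuclideanSpace ℝ (Fin d))
    (hθstar : θstar ∈ argminSet L)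
    (Linfty RL ηL νL : ℝ) (hηL : 0 < ηL) (hνL : 0 < νL)
    (hA3a : ∀ θ ∈ nbhd (argminSet L) RL,
      Metric.infDist θ (argminSet L) ≤ (1 / ηL) * (L θ - L θstar) ^ νL)
    (hA3b : ∀ θ, θ ∉ nbhd (argminSet L) RL → Linfty < L θ - L θstar)
    (hG_exp HG RHG : ℝ) (hHG : 0 < HG)
    (Ginfty RG ηG νG : ℝ)
    (kG KG RKG : ℝ) (hkG : 0 < kG) (hKG : 0 < KG) (hRKG : 0 < RKG)
    (ϱ ϱm : Measure (EuclideanSpace ℝ (Fin d)))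
    [IsProbabilityMeasure ϱ] [IsProbabilityMeasure ϱm]
    (α : ℝ) (hα : 1 / (kG * KG * RKG ^ kG) ≤ α)
    (rg : ℝ) (hrg : rg ∈ Set.Ioc (0 : ℝ) (min RG (min RHG (min RKG
      ((min Ginfty (min ((ηG * RKG) ^ (1 / νG)) (KG * RKG ^ kG)) / (2 * HG)) ^ (1 / hG_exp))))))
    (R δq : ℝ)
    (β : ℝ) (hβ : β ∈ Set.Ioo (0 : ℝ) 1)
    (hqβ : quant L ϱ β + δq ≤ L θstar + min Linfty ((ηL * rg) ^ (1 / νL)))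
    (r : ℝ)
    (u : ℝ)
    (husum : u + Gsup G θstar r + HG * rg ^ hG_exp
      ≤ min Ginfty (min ((ηG * RKG) ^ (1 / νG)) (KG * RKG ^ kG))) :
    Real.exp (α * Gsup G θstar r)
        * (∫ θ in Qset L R δq β ϱ ∩ (Metric.closedBall θstar RKG)ᶜ,
            ‖θ - θstar‖ * Real.exp (-α * KG * ‖θ - θstar‖ ^ kG) ∂ϱm)
        ≤ RKG * Real.exp (-α * u) * (ϱm (nbhd (argminSet L) rg)).toReal
    ∧ RKG * Real.exp (-α * u) * (ϱm (nbhd (argminSet L) rg)).toReal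
        ≤ RKG * Real.exp (-α * u) := by
  have hα0 : 0 < α := (one_div_pos.2 (by positivity)).trans_le hα
  have hdecay : 1 ≤ α * KG * kG * RKG ^ kG := by
    rw [div_le_iff₀ (by positivity)] at hα; linarith
  set C := RKG * Real.exp (-α * KG * RKG ^ kG)
  have hattack : ∀ θ ∈ Qset L R δq β ϱ ∩ (Metric.closedBall θstar RKG)ᶜ,
      θ ∈ nbhd (argminSet L) rg ∧
        0 ≤ ‖θ - θstar‖ * Real.exp (-α * KG * ‖θ - θstar‖ ^ kG) ∧
        ‖θ - θstar‖ * Real.exp (-α * KG * ‖θ - θstar‖ ^ kG) ≤ C := by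
    rintro θ ⟨hθQ, hθfar⟩
    have hfar : RKG ≤ ‖θ - θstar‖ := by
      rw [mem_compl_iff, Metric.mem_closedBall, dist_eq_norm, not_le] at hθfar; exact hθfar.le
    refine ⟨mem_nbhd_argminSet_of_le hθstar hηL hνL hA3a hA3b hrg.1.le
        ((Qset_subset_setOf_le_quant hLc.measurable ϱ R δq hβ hθQ).trans hqβ),
      by positivity, ?_⟩
    simpa only [C, neg_mul] using antitoneOn_mul_exp_neg_mul_rpow hRKG hkG hdecay
      (mem_Ici.2 le_rfl) hfar hfar
  have hint := setIntegral_le_mul_measureReal (μ := ϱm) (by positivity)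
    (fun θ hθ => (hattack θ hθ).1) fun θ hθ => (hattack θ hθ).2
  have hGu : u + Gsup G θstar r ≤ KG * RKG ^ kG := by
    have := husum.trans ((min_le_right _ _).trans (min_le_right _ _))
    linarith [mul_nonneg hHG.le (Real.rpow_nonneg hrg.1.le hG_exp)]
  have hexp : Real.exp (α * Gsup G θstar r) * C ≤ RKG * Real.exp (-α * u) := by
    rw [mul_left_comm, ← Real.exp_add]
    gcongr
    linarith [mul_le_mul_of_nonneg_left hGu hα0.le]
  refine ⟨?_, mul_le_of_le_one_right (by positivity) measureReal_le_one⟩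
  calc Real.exp (α * Gsup G θstar r) * (∫ θ in _, _ ∂ϱm)
      ≤ Real.exp (α * Gsup G θstar r) * (C * ϱm.real (nbhd (argminSet L) rg)) := by gcongr
    _ ≤ RKG * Real.exp (-α * u) * (ϱm (nbhd (argminSet L) rg)).toReal := by
        rw [← mul_assoc]; exact mul_le_mul_of_nonneg_right hexp ENNReal.toReal_nonneg

/-- Control of attacks: outside-ball bound. -/
theorem control_of_attacks_outside_ball
    {d : ℕ} (hd : 1 ≤ d)
    (L G : EuclideanSpace ℝ (Fin d) → ℝ)
    (hLc : Continuous L) (hGc : Continuous G)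
    (θstar : EuclideanSpace ℝ (Fin d))
    (hθstar : θstar ∈ argminSet L)
    (hA1min : ∀ θ ∈ argminSet L, G θstar ≤ G θ)
    (hA1uniq : ∀ θ ∈ argminSet L, (∀ θ' ∈ argminSet L, G θ ≤ G θ') → θ = θstar)
    (hL_exp HL RHL : ℝ) (hL_exp_pos : 0 < hL_exp) (hHL : 0 < HL) (hRHL : 0 < RHL)
    (hA2 : ∀ θ ∈ Metric.closedBall θstar RHL, L θ - L θstar ≤ HL * ‖θ - θstar‖ ^ hL_exp)
    (Linfty RL ηL νL : ℝ) (hLinfty : 0 < Linfty) (hRL : 0 < RL) (hηL : 0 < ηL) (hνL : 0 < νL)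
    (hA3a : ∀ θ ∈ nbhd (argminSet L) RL,
      Metric.infDist θ (argminSet L) ≤ (1 / ηL) * (L θ - L θstar) ^ νL)
    (hA3b : ∀ θ, θ ∉ nbhd (argminSet L) RL → Linfty < L θ - L θstar)
    (hG_exp HG RHG : ℝ) (hG_exp_pos : 0 < hG_exp) (hHG : 0 < HG) (hRHG : 0 < RHG)
    (hA4 : ∀ θ ∈ Metric.closedBall θstar RHG, G θ - G θstar ≤ HG * ‖θ - θstar‖ ^ hG_exp)
    (Ginfty RG ηG νG : ℝ) (hGinfty : 0 < Ginfty) (hRG : 0 < RG) (hηG : 0 < ηG) (hνG : 0 < νG)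
    (hA5 : ∀ rg : ℝ, 0 < rg → rg ≤ RG → ∃ θt ∈ Metric.closedBall θstar rg,
      (∀ θ ∈ Metric.closedBall θstar rg, ‖θ - θt‖ ≤ (1 / ηG) * (G θ - G θt) ^ νG) ∧
      (∀ θ ∈ nbhd (argminSet L) rg \ Metric.closedBall θstar rg, Ginfty < G θ - G θt))
    (kG KG RKG : ℝ) (hkG : 0 < kG) (hKG : 0 < KG) (hRKG : 0 < RKG)
    (hA6 : ∀ θ ∈ (Metric.closedBall θstar RKG)ᶜ ∩ nbhd (argminSet L) RG,
      KG * ‖θ - θstar‖ ^ kG ≤ G θ - G θstar)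
    (ϱ ϱm : Measure (EuclideanSpace ℝ (Fin d)))
    [IsProbabilityMeasure ϱ] [IsProbabilityMeasure ϱm]
    (α : ℝ) (hα : 1 / (kG * KG * RKG ^ kG) ≤ α)
    (rg : ℝ) (hrg : rg ∈ Set.Ioc (0 : ℝ) (min RG (min RHG (min RKG
      ((min Ginfty (min ((ηG * RKG) ^ (1 / νG)) (KG * RKG ^ kG)) / (2 * HG)) ^ (1 / hG_exp))))))
    (R δq : ℝ) (hR : 0 < R)
    (hδq : δq ∈ Set.Ioc (0 : ℝ) (min Linfty ((ηL * rg) ^ (1 / νL)) / 2))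
    (β : ℝ) (hβ : β ∈ Set.Ioo (0 : ℝ) 1)
    (hqβ : quant L ϱ β + δq ≤ L θstar + min Linfty ((ηL * rg) ^ (1 / νL)))
    (r : ℝ) (hr : r ∈ Set.Ioc (0 : ℝ) (min rg (min RHL ((δq / HL) ^ (1 / hL_exp)))))
    (hrR : Metric.closedBall θstar r ⊆ Metric.closedBall (0 : EuclideanSpace ℝ (Fin d)) R)
    (u : ℝ) (hu : 0 < u)
    (husum : u + Gsup G θstar r + HG * rg ^ hG_exp
      ≤ min Ginfty (min ((ηG * RKG) ^ (1 / νG)) (KG * RKG ^ kG))) :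
    Real.exp (α * Gsup G θstar r)
        * (∫ θ in Qset L R δq β ϱ ∩ (Metric.closedBall θstar RKG)ᶜ,
            ‖θ - θstar‖ * Real.exp (-α * KG * ‖θ - θstar‖ ^ kG) ∂ϱm)
        ≤ RKG * Real.exp (-α * u) * (ϱm (nbhd (argminSet L) rg)).toReal
    ∧ RKG * Real.exp (-α * u) * (ϱm (nbhd (argminSet L) rg)).toReal
        ≤ RKG * Real.exp (-α * u) :=
  control_of_attacks_outside_ball_general L G hLc θstar hθstar Linfty RL ηL νL hηL hνL hA3a hA3b
    hG_exp HG RHG hHG Ginfty RG ηG νG kG KG RKG hkG hKG hRKG ϱ ϱm α hα rg hrg R δq β hβ hqβ r u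
    husum
end
end

section
/- Inner inclusion for the quantiled sub-level set. Let L : ℝ^d → ℝ be continuous, let L̲ := inf_θ L(θ) be attained at θ* ∈ ℝ^d, and assume (A2): there exist h_L, R^H_L > 0 and H_L < ∞ with L(θ) − L̲ ≤ H_L‖θ−θ*‖₂^{h_L} for all θ ∈ B_{R^H_L}(θ*). Fix R > 0, δ_q > 0, β ∈ (0,1), and let r ∈ (0, min{R^H_L, (δ_q/H_L)^{1/h_L}}] be such that B_r(θ*) ⊆ B_R(0). Then for every Borel probability measure ϱ on ℝ^d one has B_r(θ*) ⊆ Q_β[ϱ]. -/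
open MeasureTheory Set
open scoped RealInnerProductSpace ENNReal

noncomputable section

/-! Every quantile of level `a ∈ (0, 1)` lies above `inf L`, so their average over `[β/2, β]`
does too; and the Hölder growth bound (A2) keeps `L` below `inf L + δq` on `B_r(θ*)`. -/

section Quantile

variable {d : ℕ} {L : EuclideanSpace ℝ (Fin d) → ℝ} {ϱ : Measure (EuclideanSpace ℝ (Fin d))}
  {m a b₁ b₂ : ℝ}

theorem tendsto_measure_setOf_le_atTop [IsProbabilityMeasure ϱ] :
    Filter.Tendsto (fun q : ℝ => (ϱ {θ | L θ ≤ q}).toReal) Filter.atTop (nhds 1) := by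
  have hmono : Monotone fun q : ℝ => {θ | L θ ≤ q} :=
    fun _ _ hpq _ hθ => le_trans hθ hpq
  have hunion : (⋃ q : ℝ, {θ | L θ ≤ q}) = univ :=
    eq_univ_of_forall fun θ => mem_iUnion.2 ⟨L θ, le_refl (L θ)⟩
  have htendsto := tendsto_measure_iUnion_atTop (μ := ϱ) hmono
  rw [hunion, measure_univ] at htendsto
  exact (ENNReal.tendsto_toReal ENNReal.one_ne_top).comp htendsto

theorem nonempty_setOf_le_measure_setOf_le [IsProbabilityMeasure ϱ] (ha : a < 1) :
    {q : ℝ | a ≤ (ϱ {θ | L θ ≤ q}).toReal}.Nonempty :=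
  (tendsto_measure_setOf_le_atTop.eventually_const_le ha).exists

theorem le_of_le_measure_setOf_le (hm : ∀ θ, m ≤ L θ) (ha : 0 < a) {q : ℝ}
    (hq : a ≤ (ϱ {θ | L θ ≤ q}).toReal) : m ≤ q := by
  by_contra! hqm
  have hempty : {θ | L θ ≤ q} = ∅ :=
    eq_empty_of_forall_notMem fun θ hθ => (hqm.trans_le (hm θ)).not_ge hθ
  rw [hempty, measure_empty, ENNReal.toReal_zero] at hq
  linarith

theorem le_quant [IsProbabilityMeasure ϱ] (hm : ∀ θ, m ≤ L θ) (ha : a ∈ Ioo 0 1) :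
    m ≤ quant L ϱ a :=
  le_csInf (nonempty_setOf_le_measure_setOf_le ha.2) fun _ => le_of_le_measure_setOf_le hm ha.1

theorem monotoneOn_quant [IsProbabilityMeasure ϱ] (hm : ∀ θ, m ≤ L θ) :
    MonotoneOn (quant L ϱ) (Ioo 0 1) := fun _ ha _ hb hab =>
  csInf_le_csInf ⟨m, fun _ => le_of_le_measure_setOf_le hm ha.1⟩
    (nonempty_setOf_le_measure_setOf_le hb.2) fun _ hq => hab.trans hq

theorem sub_mul_le_integral_quant [IsProbabilityMeasure ϱ] (hm : ∀ θ, m ≤ L θ)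
    (hb₁ : 0 < b₁) (hb : b₁ ≤ b₂) (hb₂ : b₂ < 1) :
    (b₂ - b₁) * m ≤ ∫ a in b₁..b₂, quant L ϱ a := by
  have hIcc : Icc b₁ b₂ ⊆ Ioo 0 1 := fun a ha => ⟨hb₁.trans_le ha.1, ha.2.trans_lt hb₂⟩
  have hint : IntervalIntegrable (quant L ϱ) volume b₁ b₂ :=
    ((monotoneOn_quant hm).mono (uIcc_of_le hb ▸ hIcc)).intervalIntegrable
  calc (b₂ - b₁) * m = ∫ _ in b₁..b₂, m := by rw [intervalIntegral.integral_const, smul_eq_mul]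
    _ ≤ ∫ a in b₁..b₂, quant L ϱ a :=
      intervalIntegral.integral_mono_on hb intervalIntegrable_const hint
        fun a ha => le_quant hm (hIcc ha)

theorem le_two_div_mul_integral_quant [IsProbabilityMeasure ϱ] (hm : ∀ θ, m ≤ L θ) {β : ℝ}
    (hβ : β ∈ Ioo 0 1) : m ≤ (2 / β) * ∫ a in (β / 2)..β, quant L ϱ a := by
  obtain ⟨hβ0, hβ1⟩ := hβ
  have hint := sub_mul_le_integral_quant (ϱ := ϱ) hm (half_pos hβ0) (half_le_self hβ0.le) hβ1
  calc m = (2 / β) * ((β - β / 2) * m) := by field_simp; ring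
    _ ≤ (2 / β) * ∫ a in (β / 2)..β, quant L ϱ a := by gcongr

end Quantile

theorem le_add_of_holder_growth {E : Type*} [SeminormedAddCommGroup E] {f : E → ℝ} {x₀ : E}
    {H h ρ δ r : ℝ} (hh : 0 < h) (hH : 0 < H) (hδ : 0 ≤ δ)
    (hf : ∀ x ∈ Metric.closedBall x₀ ρ, f x - f x₀ ≤ H * ‖x - x₀‖ ^ h)
    (hrρ : r ≤ ρ) (hrδ : r ≤ (δ / H) ^ (1 / h)) :
    ∀ x ∈ Metric.closedBall x₀ r, f x ≤ f x₀ + δ := by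
  intro x hx
  have hdist : ‖x - x₀‖ ≤ r := mem_closedBall_iff_norm.mp hx
  have hpow : ‖x - x₀‖ ^ h ≤ δ / H := by
    rw [← Real.le_rpow_inv_iff_of_pos (norm_nonneg _) (by positivity) hh, ← one_div]
    exact hdist.trans hrδ
  have hgrowth := hf x (Metric.closedBall_subset_closedBall hrρ hx)
  calc f x ≤ f x₀ + H * (δ / H) := by nlinarith
    _ = f x₀ + δ := by field_simp

theorem ball_subset_Qset_general {d : ℕ}
    (L : EuclideanSpace ℝ (Fin d) → ℝ)
    (θstar : EuclideanSpace ℝ (Fin d)) (hθstar : ∀ θ', L θstar ≤ L θ')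
    (hL_exp HL RHL : ℝ) (hL_exp_pos : 0 < hL_exp) (hHL : 0 < HL)
    (hA2 : ∀ θ ∈ Metric.closedBall θstar RHL, L θ - L θstar ≤ HL * ‖θ - θstar‖ ^ hL_exp)
    (R δq β : ℝ) (hδq : 0 < δq) (hβ : β ∈ Set.Ioo (0 : ℝ) 1)
    (r : ℝ) (hr : r ∈ Set.Ioc (0 : ℝ) (min RHL ((δq / HL) ^ (1 / hL_exp))))
    (hball : Metric.closedBall θstar r ⊆ Metric.closedBall (0 : EuclideanSpace ℝ (Fin d)) R) :
    ∀ ϱ : Measure (EuclideanSpace ℝ (Fin d)), IsProbabilityMeasure ϱ →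
      Metric.closedBall θstar r ⊆ Qset L R δq β ϱ := by
  intro ϱ _ θ hθ
  obtain ⟨hrRHL, hrδq⟩ := le_min_iff.mp hr.2
  have hLθ := le_add_of_holder_growth hL_exp_pos hHL hδq.le hA2 hrRHL hrδq θ hθ
  have hquant := le_two_div_mul_integral_quant (ϱ := ϱ) hθstar hβ
  exact ⟨hball hθ, by linarith⟩

/-- Inner inclusion for the quantiled sub-level set: `B_r(θ*) ⊆ Q_β[ϱ]`. -/
theorem ball_subset_Qset {d : ℕ} (hd : 1 ≤ d)
    (L : EuclideanSpace ℝ (Fin d) → ℝ) (hLc : Continuous L)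
    (θstar : EuclideanSpace ℝ (Fin d)) (hθstar : ∀ θ', L θstar ≤ L θ')
    (hL_exp HL RHL : ℝ) (hL_exp_pos : 0 < hL_exp) (hHL : 0 < HL) (hRHL : 0 < RHL)
    (hA2 : ∀ θ ∈ Metric.closedBall θstar RHL, L θ - L θstar ≤ HL * ‖θ - θstar‖ ^ hL_exp)
    (R δq β : ℝ) (hR : 0 < R) (hδq : 0 < δq) (hβ : β ∈ Set.Ioo (0 : ℝ) 1)
    (r : ℝ) (hr : r ∈ Set.Ioc (0 : ℝ) (min RHL ((δq / HL) ^ (1 / hL_exp))))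
    (hball : Metric.closedBall θstar r ⊆ Metric.closedBall (0 : EuclideanSpace ℝ (Fin d)) R) :
    ∀ ϱ : Measure (EuclideanSpace ℝ (Fin d)), IsProbabilityMeasure ϱ →
      Metric.closedBall θstar r ⊆ Qset L R δq β ϱ :=
  ball_subset_Qset_general L θstar hθstar hL_exp HL RHL hL_exp_pos hHL hA2 R δq β hδq hβ r hr hball
end
end
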